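/- arXiv:2510.04548 — 2 statements merged into one kernel-verified Lean document; each statement's English description precedes it below -/
import Mathlib

section
/- Let D, r ∈ ℕ with r ≤ D, let A ∈ ℝ^{D×r} satisfy AᵀA = I_r, and let S ∈ ℝ^{D×D} be symmetric positive semidefinite with A Aᵀ S = S. Then for all real a, b > 0 and every integer l ≥ 1, tr( A Aᵀ (a S + b I_D)^{−l} ) = tr( (a AᵀS A + b I_r)^{−l} ). (Both a S + b I_D and a AᵀSA + b I_r are positive definite, hence invertible.) -/
open Matrix

/-!
`M = a S + b I_D` and `N = a AᵀSA + b I_r` are intertwined by `A`: since `S A = A (AᵀSA)`,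
we get `M A = A N`, hence `M⁻ˡ A = A N⁻ˡ`. Cycling the trace and using `AᵀA = I_r` gives
`tr(A Aᵀ M⁻ˡ) = tr(Aᵀ M⁻ˡ A) = tr(Aᵀ A N⁻ˡ) = tr(N⁻ˡ)`.
-/

namespace Matrix

theorem PosSemidef.posDef_smul_add_smul_one {n R : Type*} [DecidableEq n] [Field R]
    [PartialOrder R] [IsOrderedRing R] [StarRing R] [StarOrderedRing R]
    {X : Matrix n n R} (hX : X.PosSemidef) {a b : R} (ha : 0 ≤ a) (hb : 0 < b) :
    (a • X + b • 1).PosDef :=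
  PosDef.posSemidef_add (hX.smul ha) (PosDef.one.smul hb)

variable {m n α : Type*} [Fintype m] [Fintype n]

section Intertwining

variable {M : Matrix m m α} {A : Matrix m n α} {N : Matrix n n α}

theorem smul_add_smul_one_mul_eq_of_mul_eq [CommSemiring α] [DecidableEq m] [DecidableEq n]
    {S : Matrix m m α} {T : Matrix n n α} (h : S * A = A * T) (a b : α) :
    (a • S + b • 1) * A = A * (a • T + b • 1) := by
  rw [Matrix.add_mul, Matrix.mul_add, Matrix.smul_mul, Matrix.mul_smul, h,
    Matrix.smul_mul, Matrix.mul_smul, Matrix.one_mul, Matrix.mul_one]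

theorem pow_mul_eq_mul_pow_of_mul_eq [Semiring α] [DecidableEq m] [DecidableEq n]
    (h : M * A = A * N) (k : ℕ) : M ^ k * A = A * N ^ k := by
  induction k with
  | zero => simp
  | succ k ih => rw [pow_succ', Matrix.mul_assoc, ih, ← Matrix.mul_assoc, h, Matrix.mul_assoc,
      ← pow_succ']

theorem inv_mul_eq_mul_inv_of_mul_eq [CommRing α] [DecidableEq m] [DecidableEq n]
    (hM : IsUnit M.det) (hN : IsUnit N.det) (h : M * A = A * N) : M⁻¹ * A = A * N⁻¹ :=
  calc M⁻¹ * A = M⁻¹ * (A * N) * N⁻¹ := by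
        rw [← Matrix.mul_assoc, Matrix.mul_nonsing_inv_cancel_right _ _ hN]
    _ = A * N⁻¹ := by rw [← h, Matrix.nonsing_inv_mul_cancel_left _ _ hM]

theorem trace_mul_mul_eq_of_mul_eq [CommSemiring α] [DecidableEq n] {B : Matrix n m α}
    (hBA : B * A = 1) (h : M * A = A * N) : (A * B * M).trace = N.trace := by
  rw [← Matrix.trace_mul_cycle, Matrix.mul_assoc, h, ← Matrix.mul_assoc, hBA, Matrix.one_mul]

end Intertwining

end Matrix

theorem stmt_3_general (D r : ℕ)
    (A : Matrix (Fin D) (Fin r) ℝ) (hA : Aᵀ * A = 1)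
    (S : Matrix (Fin D) (Fin D) ℝ) (hSpsd : S.PosSemidef)
    (hAS : A * Aᵀ * S = S)
    (a b : ℝ) (ha : 0 < a) (hb : 0 < b) (l : ℕ) :
    (A * Aᵀ * ((a • S + b • 1)⁻¹ ^ l)).trace
      = (((a • (Aᵀ * S * A) + b • 1)⁻¹) ^ l).trace := by
  have hSA : S * A = A * (Aᵀ * S * A) := by
    conv_lhs => rw [← hAS]
    simp only [Matrix.mul_assoc]
  have hASA : (Aᵀ * S * A).PosSemidef := by
    simpa using hSpsd.conjTranspose_mul_mul_same A
  have hM := (hSpsd.posDef_smul_add_smul_one ha.le hb).isUnit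
  have hN := (hASA.posDef_smul_add_smul_one ha.le hb).isUnit
  rw [isUnit_iff_isUnit_det] at hM hN
  exact trace_mul_mul_eq_of_mul_eq hA <| pow_mul_eq_mul_pow_of_mul_eq
    (inv_mul_eq_mul_inv_of_mul_eq hM hN (smul_add_smul_one_mul_eq_of_mul_eq hSA a b)) l

/-- For `A` with orthonormal columns, `S` symmetric PSD with
`A Aᵀ S = S`, `a, b > 0` and `l ≥ 1`,
`tr(A Aᵀ (a S + b I_D)^{−l}) = tr((a Aᵀ S A + b I_r)^{−l})`. -/
theorem stmt_3 (D r : ℕ) (hr : r ≤ D)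
    (A : Matrix (Fin D) (Fin r) ℝ) (hA : Aᵀ * A = 1)
    (S : Matrix (Fin D) (Fin D) ℝ) (hSpsd : S.PosSemidef)
    (hAS : A * Aᵀ * S = S)
    (a b : ℝ) (ha : 0 < a) (hb : 0 < b) (l : ℕ) (hl : 1 ≤ l) :
    (A * Aᵀ * ((a • S + b • 1)⁻¹ ^ l)).trace
      = (((a • (Aᵀ * S * A) + b • 1)⁻¹) ^ l).trace :=
  stmt_3_general D r A hA S hSpsd hAS a b ha hb l
end

section
/- Let D, L ∈ ℕ, x₁, …, x_L, x_{L+1} ∈ ℝ^D, y₁, …, y_L ∈ ℝ, and let C ∈ ℝ^{(D+1)×(L+1)} be the matrix whose l-th column is (x_l, y_l) for l ≤ L and whose last column is (x_{L+1}, 0). Let V, K, Q ∈ ℝ^{(D+1)×(D+1)}, define Atten(C) = C + (1/L) V C (K C)ᵀ (Q C), and let Read(C′) = C′_{D+1, L+1}. Write R = Kᵀ Q, and partition V and R into blocks V = [[V₁₁, v₁₂],[v₂₁ᵀ, v₂₂]], R = [[R₁₁, r₁₂],[r₂₁ᵀ, r₂₂]] with V₁₁, R₁₁ ∈ ℝ^{D×D},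 v₁₂, v₂₁, r₁₂, r₂₁ ∈ ℝ^D and v₂₂, r₂₂ ∈ ℝ. If v₂₁ = 0 and r₂₁ = 0, then Read(Atten(C)) = (1/L) v₂₂ Σ_{l=1}^L y_l x_lᵀ R₁₁ x_{L+1} = tr( W Hᵀ ), where W = (v₂₂/D) R₁₁ᵀ ∈ ℝ^{D×D} and H ∈ ℝ^{D×D} has entries H_{ij} = (D/L) x_{L+1,i} Σ_{l=1}^L y_l x_{l,j}. -/
/-! Since the bottom rows of `V` and of `R = Kᵀ Q` vanish off the diagonal and the label slot of
the query column is `0`, every block of `V C Cᵀ R C` other than `v₂₂`, the labels `y_l` and `R₁₁`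
meets a zero at the readout entry, leaving `(1/L) v₂₂ sᵀ R₁₁ x_{L+1}` with `s = Σ_l y_l x_l`.
This equals `tr(W Hᵀ)` because `tr(R₁₁ᵀ (x_{L+1} sᵀ)ᵀ) = sᵀ R₁₁ x_{L+1}` and the factors `D`
cancel, or both sides are empty sums when `D = 0`. -/

open Matrix

namespace Matrix

variable {α m p : Type*} [NonUnitalNonAssocSemiring α] {n : ℕ}

theorem mul_apply_eq_of_castSucc_eq_zero (A : Matrix m (Fin (n + 1)) α)
    (B : Matrix (Fin (n + 1)) p α) {i : m} (j : p) (hA : ∀ k : Fin n, A i k.castSucc = 0) :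
    (A * B) i j = A i (Fin.last n) * B (Fin.last n) j := by
  simp [mul_apply, Fin.sum_univ_castSucc, hA]

theorem mul_apply_eq_sum_castSucc_of_left_last_eq_zero (A : Matrix m (Fin (n + 1)) α)
    (B : Matrix (Fin (n + 1)) p α) {i : m} (j : p) (hA : A i (Fin.last n) = 0) :
    (A * B) i j = ∑ k : Fin n, A i k.castSucc * B k.castSucc j := by
  simp [mul_apply, Fin.sum_univ_castSucc, hA]

theorem mul_apply_eq_sum_castSucc_of_right_last_eq_zero (A : Matrix m (Fin (n + 1)) α)
    (B : Matrix (Fin (n + 1)) p α) (i : m) {j : p} (hB : B (Fin.last n) j = 0) :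
    (A * B) i j = ∑ k : Fin n, A i k.castSucc * B k.castSucc j := by
  simp [mul_apply, Fin.sum_univ_castSucc, hB]

theorem transpose_mul_mul_apply_eq_dotProduct_submatrix (A : Matrix (Fin (n + 1)) m α)
    (R : Matrix (Fin (n + 1)) (Fin (n + 1)) α) (B : Matrix (Fin (n + 1)) p α) (i : m) {j : p}
    (hR : ∀ k : Fin n, R (Fin.last n) k.castSucc = 0) (hB : B (Fin.last n) j = 0) :
    (Aᵀ * (R * B)) i j = (fun k => A k.castSucc i) ⬝ᵥ
      R.submatrix Fin.castSucc Fin.castSucc *ᵥ (fun k => B k.castSucc j) := by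
  have hRB : ∀ a, (R * B) a j = ∑ k : Fin n, R a k.castSucc * B k.castSucc j :=
    fun a => mul_apply_eq_sum_castSucc_of_right_last_eq_zero R B a hB
  have hRB_last : (R * B) (Fin.last n) j = 0 := by simp [hRB, hR]
  rw [mul_apply_eq_sum_castSucc_of_right_last_eq_zero _ _ _ hRB_last]
  simp [hRB, dotProduct, mulVec]

theorem trace_transpose_mul_transpose_vecMulVec {α n : Type*} [Fintype n] [CommSemiring α]
    (M : Matrix n n α) (u v : n → α) :
    (Mᵀ * (vecMulVec u v)ᵀ).trace = v ⬝ᵥ M *ᵥ u := by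
  rw [transpose_vecMulVec, mul_vecMulVec, trace_vecMulVec, mulVec_transpose, dotProduct_mulVec]

theorem trace_div_smul_transpose_mul_transpose_smul_vecMulVec {𝕜 : Type*} [Field 𝕜] [CharZero 𝕜]
    {D : ℕ} (c a : 𝕜) (M : Matrix (Fin D) (Fin D) 𝕜) (u v : Fin D → 𝕜) :
    ((c / D) • Mᵀ * ((D / a) • vecMulVec u v)ᵀ).trace = c / a * (v ⬝ᵥ M *ᵥ u) := by
  rw [transpose_smul, smul_mul_smul_comm, trace_smul, trace_transpose_mul_transpose_vecMulVec,
    smul_eq_mul]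
  rcases eq_or_ne D 0 with rfl | hD
  · simp
  · field_simp

end Matrix

/-- reduction of single-layer linear attention to a linear
network. With context matrix `C` built from demonstrations `(x_l, y_l)` and
query `x_{L+1}` (label placeholder `0`), `Atten(C) = C + (1/L) V C (K C)ᵀ (Q C)`,
`R = Kᵀ Q`, and vanishing off-diagonal blocks `v₂₁ = 0`, `r₂₁ = 0`, the readout
at the label position of the query column equals
`(1/L) v₂₂ Σ_l y_l x_lᵀ R₁₁ x_{L+1} = tr(W Hᵀ)` with `W = (v₂₂/D) R₁₁ᵀ` and
`H_{ij} = (D/L) x_{L+1,i} Σ_l y_l x_{l,j}`. -/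
theorem stmt_13 (D L : ℕ)
    (x : Fin (L + 1) → Fin D → ℝ) (y : Fin L → ℝ)
    (C : Matrix (Fin (D + 1)) (Fin (L + 1)) ℝ)
    (hC : ∀ i j, C i j =
      if hi : (i : ℕ) < D then x j ⟨i, hi⟩
      else if hj : (j : ℕ) < L then y ⟨j, hj⟩ else 0)
    (V K Q : Matrix (Fin (D + 1)) (Fin (D + 1)) ℝ)
    (R : Matrix (Fin (D + 1)) (Fin (D + 1)) ℝ) (hR : R = Kᵀ * Q)
    (hv21 : ∀ i : Fin D, V (Fin.last D) i.castSucc = 0)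
    (hr21 : ∀ j : Fin D, R (Fin.last D) j.castSucc = 0)
    (Atten : Matrix (Fin (D + 1)) (Fin (L + 1)) ℝ)
    (hAtten : Atten = C + (1 / (L : ℝ)) • (V * C * (K * C)ᵀ * (Q * C)))
    (W H : Matrix (Fin D) (Fin D) ℝ)
    (hW : ∀ i j : Fin D,
      W i j = V (Fin.last D) (Fin.last D) / (D : ℝ) * R j.castSucc i.castSucc)
    (hH : ∀ i j : Fin D, H i j
      = (D : ℝ) / (L : ℝ) * x (Fin.last L) i * ∑ l : Fin L, y l * x l.castSucc j) :
    Atten (Fin.last D) (Fin.last L)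
        = (1 / (L : ℝ)) * V (Fin.last D) (Fin.last D)
            * ∑ l : Fin L, y l *
                (x l.castSucc ⬝ᵥ
                  (R.submatrix Fin.castSucc Fin.castSucc).mulVec (x (Fin.last L)))
      ∧ Atten (Fin.last D) (Fin.last L) = (W * Hᵀ).trace := by
  have hC_feature (i : Fin D) (j : Fin (L + 1)) : C i.castSucc j = x j i := by simp [hC]
  have hC_label (l : Fin L) : C (Fin.last D) l.castSucc = y l := by simp [hC]
  have hC_query : C (Fin.last D) (Fin.last L) = 0 := by simp [hC]
  set v := V (Fin.last D) (Fin.last D)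
  set R₁₁ := R.submatrix Fin.castSucc Fin.castSucc
  set s := ∑ l : Fin L, y l • x l.castSucc
  have hread : Atten (Fin.last D) (Fin.last L)
      = 1 / (L : ℝ) * v * ∑ l : Fin L, y l * (x l.castSucc ⬝ᵥ R₁₁ *ᵥ x (Fin.last L)) := by
    calc Atten (Fin.last D) (Fin.last L)
        = 1 / (L : ℝ) * (V * (C * (Cᵀ * (R * C)))) (Fin.last D) (Fin.last L) := by
          simp [hAtten, hR, hC_query, transpose_mul, Matrix.mul_assoc]
      _ = 1 / (L : ℝ) * (v * ∑ l : Fin L, y l * (Cᵀ * (R * C)) l.castSucc (Fin.last L)) := by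
          rw [mul_apply_eq_of_castSucc_eq_zero _ _ _ hv21,
            mul_apply_eq_sum_castSucc_of_left_last_eq_zero _ _ _ hC_query]
          simp only [hC_label, v]
      _ = _ := by
          simp only [transpose_mul_mul_apply_eq_dotProduct_submatrix _ _ _ _ hr21 hC_query,
            hC_feature]
          ring
  refine ⟨hread, hread.trans ?_⟩
  have hW' : W = (v / D) • R₁₁ᵀ := by ext i j; simp [hW, R₁₁, v]
  have hH' : H = (D / L : ℝ) • vecMulVec (x (Fin.last L)) s := by
    ext i j; simp [hH, s, vecMulVec_apply, Finset.sum_apply, mul_assoc]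
  rw [hW', hH', trace_div_smul_transpose_mul_transpose_smul_vecMulVec]
  simp only [s, sum_dotProduct, smul_dotProduct, smul_eq_mul]
  ring
end
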